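/- Consider the system Σ_m = (A, E_a, C_d, 0) where A is the 3N×3N block matrix [[0, I, 0], [-M⁻¹(L+Θ), -M⁻¹H, M⁻¹Φ], [0, -(κ_D/τ)I, -(1/τ)I]], E_a = [0ᵀ, e_aᵀ, 0ᵀ]ᵀ, C_d = [e_dᵀ, 0ᵀ, 0ᵀ]. Let λ ∈ ℂ with τλ + 1 ≠ 0 and such that Q(λ) = L + Θ + λ²M + λH + (λκ_D/(τλ+1))Φ is invertible. Then λ is an invariant zero of Σ_m with g ≠ 0 if and only if e_dᵀ M Q(λ)⁻¹ e_a = 0; equivalently, since M is diagonal positive, if and only if (Q(λ)⁻¹)_{da} = 0. -/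

import Mathlib

open Matrix

/-- A 3×3 block matrix with `N × N` blocks. -/
def blk3 {α : Type*} {N : ℕ} (A11 A12 A13 A21 A22 A23 A31 A32 A33 : Matrix (Fin N) (Fin N) α) :
    Matrix (Fin N ⊕ (Fin N ⊕ Fin N)) (Fin N ⊕ (Fin N ⊕ Fin N)) α :=
  Matrix.of fun i j =>
    match i, j with
    | .inl i, .inl j => A11 i j
    | .inl i, .inr (.inl j) => A12 i j
    | .inl i, .inr (.inr j) => A13 i j
    | .inr (.inl i), .inl j => A21 i j
    | .inr (.inl i), .inr (.inl j) => A22 i j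
    | .inr (.inl i), .inr (.inr j) => A23 i j
    | .inr (.inr i), .inl j => A31 i j
    | .inr (.inr i), .inr (.inl j) => A32 i j
    | .inr (.inr i), .inr (.inr j) => A33 i j

/-! Write `x = (ν₁, ν₂, ν₃)`. The first block row of `(λI - A)x = g E_a` says `ν₂ = λν₁`, the
third (solvable because `τλ + 1 ≠ 0`) says `ν₃ = -(λκ_D/(τλ+1)) ν₁`, and multiplying the second
by `M` turns it into `Q(λ) ν₁ = g M e_a`. Since `Q(λ)` is invertible, `ν₁ = g Q(λ)⁻¹ M e_a`, so
`C_d x = g m_a (Q(λ)⁻¹)_{da}`; conversely `g = 1`, `ν₁ = Q(λ)⁻¹ M e_a` gives a zero direction,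
nonzero because `M e_a ≠ 0`. -/

lemma Sum.smul_elim {α β R γ : Type*} [SMul R γ] (c : R) (u : α → γ) (v : β → γ) :
    c • Sum.elim u v = Sum.elim (c • u) (c • v) := by
  ext (i | i) <;> rfl

section Blocks

variable {α : Type*} {N : ℕ}

lemma blk3_mulVec [NonUnitalNonAssocSemiring α]
    (A11 A12 A13 A21 A22 A23 A31 A32 A33 : Matrix (Fin N) (Fin N) α) (v1 v2 v3 : Fin N → α) :
    blk3 A11 A12 A13 A21 A22 A23 A31 A32 A33 *ᵥ Sum.elim v1 (Sum.elim v2 v3) =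
      Sum.elim (A11 *ᵥ v1 + A12 *ᵥ v2 + A13 *ᵥ v3)
        (Sum.elim (A21 *ᵥ v1 + A22 *ᵥ v2 + A23 *ᵥ v3) (A31 *ᵥ v1 + A32 *ᵥ v2 + A33 *ᵥ v3)) := by
  ext (i | i | i) <;> simp [blk3, mulVec, dotProduct, Fintype.sum_sum_type, add_assoc]

lemma smul_one_sub_blk3 [Ring α] (c : α)
    (A11 A12 A13 A21 A22 A23 A31 A32 A33 : Matrix (Fin N) (Fin N) α) :
    c • 1 - blk3 A11 A12 A13 A21 A22 A23 A31 A32 A33 =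
      blk3 (c • 1 - A11) (-A12) (-A13) (-A21) (c • 1 - A22) (-A23) (-A31) (-A32) (c • 1 - A33) := by
  ext (i | i | i) (j | j | j) <;> simp [blk3, one_apply]

end Blocks

lemma Matrix.inv_mulVec_eq_iff {n K : Type*} [Fintype n] [DecidableEq n] [CommRing K]
    {M : Matrix n n K} (hM : IsUnit M.det) {w v : n → K} : M⁻¹ *ᵥ w = v ↔ w = M *ᵥ v :=
  ⟨fun h => by rw [← h, mulVec_mulVec, mul_nonsing_inv _ hM, one_mulVec],
    fun h => by rw [h, mulVec_mulVec, nonsing_inv_mul _ hM, one_mulVec]⟩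

lemma third_row_eq_zero_iff {K V : Type*} [Field K] [AddCommGroup V] [Module K V]
    {κ τ lam : K} (hτ : τ ≠ 0) (hlam : τ * lam + 1 ≠ 0) (ν ν' : V) :
    (κ / τ) • (lam • ν) + (lam • ν' + τ⁻¹ • ν') = 0 ↔ ν' = -(lam * κ / (τ * lam + 1)) • ν := by
  have hpole : lam + τ⁻¹ = (τ * lam + 1) / τ := by field_simp
  have hne : lam + τ⁻¹ ≠ 0 := by rw [hpole]; exact div_ne_zero hlam hτ
  rw [← add_smul, smul_smul, add_eq_zero_iff_eq_neg', ← neg_smul, ← eq_inv_smul_iff₀ hne,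
    smul_smul, hpole]
  congr! 2
  field_simp

section Pencil

variable {K : Type*} [Field K] {N : ℕ}

lemma second_row_eq_smul_iff {M S D F Q : Matrix (Fin N) (Fin N) K} {lam c g : K}
    (hM : IsUnit M.det) (hQ : Q = S + lam ^ 2 • M + lam • D + c • F) (u ν : Fin N → K) :
    (M⁻¹ * S) *ᵥ ν + (lam • (lam • ν) + (M⁻¹ * D) *ᵥ (lam • ν)) - (M⁻¹ * F) *ᵥ (-c • ν) = g • u ↔
      Q *ᵥ ν = g • (M *ᵥ u) := by
  have hlhs : (M⁻¹ * S) *ᵥ ν + (lam • (lam • ν) + (M⁻¹ * D) *ᵥ (lam • ν)) - (M⁻¹ * F) *ᵥ (-c • ν)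
      = M⁻¹ *ᵥ (Q *ᵥ ν) := by
    simp only [hQ, add_mulVec, smul_mulVec, mulVec_add, mulVec_smul, ← mulVec_mulVec,
      inv_mulVec_eq_iff hM |>.2 rfl, pow_two, smul_smul, neg_smul, mulVec_neg]
    abel
  rw [hlhs, inv_mulVec_eq_iff hM, mulVec_smul]

theorem smul_one_sub_blk3_mulVec_eq_iff {M S D F Q : Matrix (Fin N) (Fin N) K} {κ τ lam g : K}
    (hM : IsUnit M.det) (hτ : τ ≠ 0) (hlam : τ * lam + 1 ≠ 0)
    (hQ : Q = S + lam ^ 2 • M + lam • D + (lam * κ / (τ * lam + 1)) • F)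
    (u ν₁ ν₂ ν₃ : Fin N → K) :
    (lam • 1 - blk3 0 1 0 (-(M⁻¹ * S)) (-(M⁻¹ * D)) (M⁻¹ * F) 0 (-((κ / τ) • 1)) (-(τ⁻¹ • 1)))
        *ᵥ Sum.elim ν₁ (Sum.elim ν₂ ν₃) = g • Sum.elim (0 : Fin N → K) (Sum.elim u 0) ↔
      ν₂ = lam • ν₁ ∧ ν₃ = -(lam * κ / (τ * lam + 1)) • ν₁ ∧ Q *ᵥ ν₁ = g • (M *ᵥ u) := by
  rw [smul_one_sub_blk3, blk3_mulVec, Sum.smul_elim, Sum.smul_elim, smul_zero, Sum.elim_eq_iff,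
    Sum.elim_eq_iff]
  simp only [sub_zero, neg_zero, neg_neg, zero_mulVec, add_zero, zero_add, sub_neg_eq_add]
  simp only [add_mulVec, neg_mulVec, smul_mulVec, one_mulVec, ← sub_eq_add_neg, sub_eq_zero]
  rw [eq_comm]
  refine and_congr_right fun hν₂ => ?_
  subst hν₂
  rw [and_comm, third_row_eq_zero_iff hτ hlam]
  refine and_congr_right fun hν₃ => ?_
  subst hν₃
  exact second_row_eq_smul_iff hM hQ u ν₁

theorem exists_blk3_invariant_zero_iff {M S D F Q : Matrix (Fin N) (Fin N) K} {κ τ lam : K}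
    (hM : IsUnit M.det) (hτ : τ ≠ 0) (hlam : τ * lam + 1 ≠ 0)
    (hQ : Q = S + lam ^ 2 • M + lam • D + (lam * κ / (τ * lam + 1)) • F) (hQdet : IsUnit Q.det)
    {u : Fin N → K} (hu : M *ᵥ u ≠ 0) (c : Fin N → K) :
    (∃ x : Fin N ⊕ (Fin N ⊕ Fin N) → K, x ≠ 0 ∧ ∃ g : K, g ≠ 0 ∧
        (lam • 1 - blk3 0 1 0 (-(M⁻¹ * S)) (-(M⁻¹ * D)) (M⁻¹ * F) 0 (-((κ / τ) • 1))
          (-(τ⁻¹ • 1))) *ᵥ x = g • Sum.elim (0 : Fin N → K) (Sum.elim u 0) ∧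
        Sum.elim c 0 ⬝ᵥ x = 0) ↔
      c ⬝ᵥ (Q⁻¹ *ᵥ (M *ᵥ u)) = 0 := by
  constructor
  · rintro ⟨x, -, g, hg, hx, hc⟩
    obtain ⟨ν₁, ν₂, ν₃, rfl⟩ : ∃ ν₁ ν₂ ν₃, x = Sum.elim ν₁ (Sum.elim ν₂ ν₃) :=
      ⟨x ∘ .inl, x ∘ .inr ∘ .inl, x ∘ .inr ∘ .inr, by ext (i | i | i) <;> rfl⟩
    obtain ⟨-, -, hQν⟩ := (smul_one_sub_blk3_mulVec_eq_iff hM hτ hlam hQ u ν₁ ν₂ ν₃).1 hx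
    rw [sumElim_dotProduct_sumElim, zero_dotProduct, add_zero,
      ← (inv_mulVec_eq_iff hQdet).2 hQν.symm, mulVec_smul, dotProduct_smul, smul_eq_mul] at hc
    exact (mul_eq_zero.1 hc).resolve_left hg
  · intro hc
    set ν := Q⁻¹ *ᵥ (M *ᵥ u)
    have hQν : Q *ᵥ ν = M *ᵥ u := by rw [mulVec_mulVec, mul_nonsing_inv _ hQdet, one_mulVec]
    refine ⟨Sum.elim ν (Sum.elim (lam • ν) (-(lam * κ / (τ * lam + 1)) • ν)), fun h0 => hu ?_, 1,
      one_ne_zero,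
      (smul_one_sub_blk3_mulVec_eq_iff hM hτ hlam hQ _ _ _ _).2 ⟨rfl, rfl, by rw [hQν, one_smul]⟩,
      by rwa [sumElim_dotProduct_sumElim, zero_dotProduct, add_zero]⟩
    have hν : ν = 0 := funext fun i => congrFun h0 (.inl i)
    rw [← hQν, hν, mulVec_zero]

end Pencil

theorem stmt11_general {N : ℕ}
    (m : Fin N → ℝ)
    (hm : ∀ i, 0 < m i)
    (κ τ : ℝ) (hτ : 0 < τ)
    (d ia : Fin N) (lam : ℂ) (hlam : τ * lam + 1 ≠ 0)
    (Lc Mc Hc Θc Φc : Matrix (Fin N) (Fin N) ℂ)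
    (hMc : Mc = Matrix.diagonal fun i => (m i : ℂ))
    (A : Matrix (Fin N ⊕ (Fin N ⊕ Fin N)) (Fin N ⊕ (Fin N ⊕ Fin N)) ℂ)
    (hA : A = blk3 0 1 0
      (-(Mc⁻¹ * (Lc + Θc))) (-(Mc⁻¹ * Hc)) (Mc⁻¹ * Φc)
      0 (-(((κ : ℂ) / (τ : ℂ)) • (1 : Matrix (Fin N) (Fin N) ℂ)))
      (-((τ : ℂ)⁻¹ • (1 : Matrix (Fin N) (Fin N) ℂ))))
    (Q : Matrix (Fin N) (Fin N) ℂ)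
    (hQ : Q = Lc + Θc + lam ^ 2 • Mc + lam • Hc + (lam * κ / (τ * lam + 1)) • Φc)
    (hQinv : IsUnit Q.det) :
    (∃ x : (Fin N ⊕ (Fin N ⊕ Fin N)) → ℂ, x ≠ 0 ∧ ∃ g : ℂ, g ≠ 0 ∧
        (lam • (1 : Matrix (Fin N ⊕ (Fin N ⊕ Fin N)) (Fin N ⊕ (Fin N ⊕ Fin N)) ℂ) - A) *ᵥ x
          = g • Sum.elim (0 : Fin N → ℂ) (Sum.elim (Pi.single ia 1) (0 : Fin N → ℂ)) ∧
        Sum.elim (Pi.single d 1) (0 : (Fin N ⊕ Fin N) → ℂ) ⬝ᵥ x = 0)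
      ↔ (Pi.single d 1 : Fin N → ℂ) ⬝ᵥ (Mc *ᵥ (Q⁻¹ *ᵥ Pi.single ia 1)) = 0 ∧
        Q⁻¹ d ia = 0 := by
  have hm0 : ∀ i, (m i : ℂ) ≠ 0 := fun i => Complex.ofReal_ne_zero.2 (hm i).ne'
  have hMdet : IsUnit Mc.det := by
    rw [hMc, det_diagonal, isUnit_iff_ne_zero]
    exact Finset.prod_ne_zero_iff.2 fun i _ => hm0 i
  have hMe : Mc *ᵥ Pi.single ia 1 = Pi.single ia (m ia : ℂ) := by
    rw [hMc, diagonal_mulVec_single, mul_one]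
  rw [hA, exists_blk3_invariant_zero_iff hMdet (Complex.ofReal_ne_zero.2 hτ.ne') hlam hQ hQinv
    (by rw [hMe]; exact Pi.single_ne_zero_iff.2 (hm0 ia))]
  rw [hMe, single_dotProduct, single_dotProduct, one_mul, one_mul, hMc, mulVec_diagonal]
  simp only [mulVec, dotProduct_single, mul_one, mul_eq_zero, hm0, false_or, or_false, and_self]

/-- For the system `Σ_m = (A, E_a, C_d, 0)` with the 3N×3N closed-loop
matrix `A`, `E_a = [0; e_a; 0]`, `C_d = [e_dᵀ, 0, 0]`, and `λ ∈ ℂ` with `τλ + 1 ≠ 0` and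
`Q(λ) = L + Θ + λ²M + λH + (λκ_D/(τλ+1))Φ` invertible, `λ` is an invariant zero of `Σ_m`
with `g ≠ 0` if and only if `e_dᵀ M Q(λ)⁻¹ e_a = 0`, equivalently `(Q(λ)⁻¹)_{da} = 0`. -/
theorem stmt11 {N : ℕ} (a : Matrix (Fin N) (Fin N) ℝ)
    (ha_symm : ∀ i j, a i j = a j i) (ha_nonneg : ∀ i j, 0 ≤ a i j)
    (ha_diag : ∀ i, a i i = 0)
    (ha_conn : ∀ i j : Fin N, Relation.ReflTransGen (fun u v => a u v ≠ 0) i j)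
    (L : Matrix (Fin N) (Fin N) ℝ)
    (hL : L = Matrix.of fun i j => if i = j then ∑ k, a i k else -(a i j))
    (θ m h φ : Fin N → ℝ)
    (hθ : ∀ i, 0 < θ i) (hm : ∀ i, 0 < m i) (hh : ∀ i, 0 < h i) (hφ : ∀ i, 0 < φ i)
    (κ τ : ℝ) (hκ : 0 < κ) (hτ : 0 < τ)
    (d ia : Fin N) (lam : ℂ) (hlam : τ * lam + 1 ≠ 0)
    (Lc Mc Hc Θc Φc : Matrix (Fin N) (Fin N) ℂ)
    (hLc : Lc = L.map (Complex.ofReal ·))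
    (hMc : Mc = Matrix.diagonal fun i => (m i : ℂ))
    (hHc : Hc = Matrix.diagonal fun i => (h i : ℂ))
    (hΘc : Θc = Matrix.diagonal fun i => (θ i : ℂ))
    (hΦc : Φc = Matrix.diagonal fun i => (φ i : ℂ))
    (A : Matrix (Fin N ⊕ (Fin N ⊕ Fin N)) (Fin N ⊕ (Fin N ⊕ Fin N)) ℂ)
    (hA : A = blk3 0 1 0
      (-(Mc⁻¹ * (Lc + Θc))) (-(Mc⁻¹ * Hc)) (Mc⁻¹ * Φc)
      0 (-(((κ : ℂ) / (τ : ℂ)) • (1 : Matrix (Fin N) (Fin N) ℂ)))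
      (-((τ : ℂ)⁻¹ • (1 : Matrix (Fin N) (Fin N) ℂ))))
    (Q : Matrix (Fin N) (Fin N) ℂ)
    (hQ : Q = Lc + Θc + lam ^ 2 • Mc + lam • Hc + (lam * κ / (τ * lam + 1)) • Φc)
    (hQinv : IsUnit Q.det) :
    (∃ x : (Fin N ⊕ (Fin N ⊕ Fin N)) → ℂ, x ≠ 0 ∧ ∃ g : ℂ, g ≠ 0 ∧
        (lam • (1 : Matrix (Fin N ⊕ (Fin N ⊕ Fin N)) (Fin N ⊕ (Fin N ⊕ Fin N)) ℂ) - A) *ᵥ x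
          = g • Sum.elim (0 : Fin N → ℂ) (Sum.elim (Pi.single ia 1) (0 : Fin N → ℂ)) ∧
        Sum.elim (Pi.single d 1) (0 : (Fin N ⊕ Fin N) → ℂ) ⬝ᵥ x = 0)
      ↔ (Pi.single d 1 : Fin N → ℂ) ⬝ᵥ (Mc *ᵥ (Q⁻¹ *ᵥ Pi.single ia 1)) = 0 ∧
        Q⁻¹ d ia = 0 :=
  stmt11_general m hm κ τ hτ d ia lam hlam Lc Mc Hc Θc Φc hMc A hA Q hQ hQinv
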